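/- Let λ > 0 and y ∈ ℝ^M, and let x⋆ be a minimizer of problem (P). Suppose the norm A is decomposable at L* x⋆ with data (T, e), and set S := T⊥. Suppose V and W are mutually orthogonal subspaces of ℝ^P with S = V ⊕ W, and that A is separable on S: for every u ∈ ℝ^P, A(P_S u) = A(P_V u) + A(P_W u). Assume the source condition SC(x⋆) holds with (η, α) and that A*(P_V α) < 1, and assume Φ is injective on ker(L_V*), i.e. ker(Φ) ∩ ker(P_V ∘ L*) = {0}. Then x⋆ is the unique minimizer of (P). -/

import Mathlib

open RealInnerProductSpace

noncomputable section

abbrev Euc (n : ℕ) := EuclideanSpace ℝ (Fin n)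

def proj {n : ℕ} (V : Submodule ℝ (Euc n)) : Euc n →L[ℝ] Euc n :=
  V.subtypeL.comp (Submodule.orthogonalProjection V)

def dualNorm {n : ℕ} (A : Euc n → ℝ) (α : Euc n) : ℝ :=
  sSup {r : ℝ | ∃ v : Euc n, A v ≤ 1 ∧ r = ⟪α, v⟫}

def subdiff {n : ℕ} (f : Euc n → ℝ) (x : Euc n) : Set (Euc n) :=
  {g : Euc n | ∀ y : Euc n, f x + ⟪g, y - x⟫ ≤ f y}

def IsNorm {n : ℕ} (A : Euc n → ℝ) : Prop :=
  (∀ x, A x = 0 ↔ x = 0) ∧ (∀ (c : ℝ) (x : Euc n), A (c • x) = |c| * A x) ∧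
    (∀ x y, A (x + y) ≤ A x + A y)

def Decomposable {n : ℕ} (A : Euc n → ℝ) (u : Euc n) (T : Submodule ℝ (Euc n)) (e : Euc n) :
    Prop :=
  e ∈ T ∧
  subdiff A u = {α : Euc n | proj T α = e ∧ dualNorm A (proj Tᗮ α) ≤ 1} ∧
  ∀ z : Euc n, z ∈ Tᗮ →
    A z = sSup {r : ℝ | ∃ v ∈ (Tᗮ : Submodule ℝ (Euc n)), dualNorm A v ≤ 1 ∧ r = ⟪v, z⟫}

def obj {N M P : ℕ} (Φ : Euc N →L[ℝ] Euc M) (L : Euc P →L[ℝ] Euc N) (A : Euc P → ℝ)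
    (y : Euc M) (lam : ℝ) (x : Euc N) : ℝ :=
  (1/2) * ‖y - Φ x‖^2 + lam * A (ContinuousLinearMap.adjoint L x)

def SC {N M P : ℕ} (Φ : Euc N →L[ℝ] Euc M) (L : Euc P →L[ℝ] Euc N) (A : Euc P → ℝ)
    (x : Euc N) (η : Euc M) (α : Euc P) : Prop :=
  α ∈ subdiff A (ContinuousLinearMap.adjoint L x) ∧
  ContinuousLinearMap.adjoint Φ η = L α ∧
  L α ∈ subdiff (fun z => A (ContinuousLinearMap.adjoint L z)) x

def breg {n : ℕ} (A : Euc n → ℝ) (α u u₀ : Euc n) : ℝ :=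
  A u - A u₀ - ⟪α, u - u₀⟫

/-!
Two minimizers `x`, `xs` have the same fit `Φ x = Φ xs` (the data term is strictly convex in
`Φ x`), hence the same regularizer value. For `z = L* (x - xs)` the source condition gives
`⟪α, z⟫ = ⟪η, Φ (x - xs)⟫ = 0`, and testing the subgradients `e + v` (`v ∈ Tᗮ`,
`dualNorm A v ≤ 1`) of `A` at `L* xs` against `z` gives `A (P_S z) ≤ ⟪P_S α, z⟫`. Splitting
`S = V ⊕ W`, the `W`-part of the right side is at most `A (P_W z)` and the `V`-part at most
`A* (P_V α) · A (P_V z)` with `A* (P_V α) < 1`, so separability forces `P_V z = 0`; injectivity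
of `Φ` on `ker (P_V L*)` then gives `x = xs`.
-/

namespace Submodule

variable {𝕜 E : Type*} [RCLike 𝕜] [NormedAddCommGroup E] [InnerProductSpace 𝕜 E]

theorem inner_starProjection_right_of_mem {K : Submodule 𝕜 E} [K.HasOrthogonalProjection]
    {v : E} (hv : v ∈ K) (z : E) : inner 𝕜 v (K.starProjection z) = inner 𝕜 v z := by
  rw [← inner_starProjection_left_eq_right, starProjection_eq_self_iff.mpr hv]

theorem IsOrtho.starProjection_sup_apply {V W : Submodule 𝕜 E} [V.HasOrthogonalProjection]
    [W.HasOrthogonalProjection] [(V ⊔ W).HasOrthogonalProjection] (h : V ⟂ W) (u : E) :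
    (V ⊔ W).starProjection u = V.starProjection u + W.starProjection u := by
  refine eq_starProjection_of_mem_orthogonal
    (add_mem_sup (starProjection_apply_mem V u) (starProjection_apply_mem W u)) ?_
  rw [← inf_orthogonal]
  refine ⟨?_, ?_⟩
  · rw [← sub_sub]
    exact sub_mem (sub_starProjection_mem_orthogonal u) (h.ge (starProjection_apply_mem W u))
  · rw [add_comm, ← sub_sub]
    exact sub_mem (sub_starProjection_mem_orthogonal u) (h.le (starProjection_apply_mem V u))

end Submodule

theorem proj_eq_starProjection {n : ℕ} (V : Submodule ℝ (Euc n)) : proj V = V.starProjection :=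
  rfl

namespace IsNorm

variable {n : ℕ} {A : Euc n → ℝ}

theorem eq_zero_iff (hA : IsNorm A) {x : Euc n} : A x = 0 ↔ x = 0 := hA.1 x

theorem map_smul (hA : IsNorm A) (c : ℝ) (x : Euc n) : A (c • x) = |c| * A x := hA.2.1 c x

theorem add_le (hA : IsNorm A) (x y : Euc n) : A (x + y) ≤ A x + A y := hA.2.2 x y

theorem map_zero (hA : IsNorm A) : A 0 = 0 := hA.eq_zero_iff.mpr rfl

theorem nonneg (hA : IsNorm A) (x : Euc n) : 0 ≤ A x := by
  have h := hA.add_le x (-x)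
  rw [add_neg_cancel, hA.map_zero, ← neg_one_smul ℝ x, hA.map_smul] at h
  simp only [abs_neg, abs_one, one_mul] at h
  linarith

theorem pos (hA : IsNorm A) {x : Euc n} (hx : x ≠ 0) : 0 < A x :=
  (hA.nonneg x).lt_of_ne' (hA.eq_zero_iff.not.mpr hx)

theorem convexOn (hA : IsNorm A) : ConvexOn ℝ Set.univ A := by
  refine ⟨convex_univ, fun x _ y _ a b ha hb _ => ?_⟩
  calc A (a • x + b • y) ≤ A (a • x) + A (b • y) := hA.add_le _ _
    _ = a • A x + b • A y := by
      rw [hA.map_smul, hA.map_smul, abs_of_nonneg ha, abs_of_nonneg hb, smul_eq_mul, smul_eq_mul]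

theorem continuous (hA : IsNorm A) : Continuous A :=
  hA.convexOn.locallyLipschitz.continuous

theorem exists_mul_norm_le (hA : IsNorm A) : ∃ m > 0, ∀ v : Euc n, m * ‖v‖ ≤ A v := by
  obtain ⟨m, hm, hmA⟩ := (isCompact_sphere (0 : Euc n) 1).exists_forall_le'
    hA.continuous.continuousOn fun v hv => hA.pos (ne_zero_of_mem_unit_sphere ⟨v, hv⟩)
  refine ⟨m, hm, fun v => ?_⟩
  rcases eq_or_ne v 0 with rfl | hv
  · simp [hA.map_zero]
  have hnv : 0 < ‖v‖ := norm_pos_iff.mpr hv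
  have h := hmA (‖v‖⁻¹ • v) (by simp [norm_smul, hnv.ne'])
  rw [hA.map_smul, abs_of_pos (inv_pos.mpr hnv), le_inv_mul_iff₀ hnv] at h
  linarith

theorem bddAbove_inner_unitBall (hA : IsNorm A) (β : Euc n) :
    BddAbove {r : ℝ | ∃ v : Euc n, A v ≤ 1 ∧ r = ⟪β, v⟫} := by
  obtain ⟨m, hm, hmA⟩ := hA.exists_mul_norm_le
  refine ⟨‖β‖ * m⁻¹, ?_⟩
  rintro _ ⟨v, hv, rfl⟩
  have hvm : ‖v‖ ≤ m⁻¹ := by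
    rw [← one_div, le_div_iff₀ hm]; linarith [hmA v]
  exact (real_inner_le_norm β v).trans (mul_le_mul_of_nonneg_left hvm (norm_nonneg β))

theorem inner_le_dualNorm_mul (hA : IsNorm A) (β u : Euc n) :
    ⟪β, u⟫ ≤ dualNorm A β * A u := by
  rcases eq_or_ne u 0 with rfl | hu
  · simp [hA.map_zero]
  have hAu := hA.pos hu
  have hunit : A ((A u)⁻¹ • u) ≤ 1 := by
    rw [hA.map_smul, abs_of_pos (inv_pos.mpr hAu), inv_mul_cancel₀ hAu.ne']
  have h := le_csSup (hA.bddAbove_inner_unitBall β) ⟨_, hunit, rfl⟩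
  rw [real_inner_smul_right, inv_mul_le_iff₀ hAu, mul_comm] at h
  exact h

end IsNorm

section Objective

variable {N M P : ℕ} (Φ : Euc N →L[ℝ] Euc M) (L : Euc P →L[ℝ] Euc N) {A : Euc P → ℝ}
  {lam : ℝ} (y : Euc M)

theorem obj_midpoint_add_le (hA : IsNorm A) (hlam : 0 ≤ lam) (x x' : Euc N) :
    obj Φ L A y lam ((2 : ℝ)⁻¹ • (x + x')) + ‖Φ x - Φ x'‖ ^ 2 / 8 ≤
      (obj Φ L A y lam x + obj Φ L A y lam x') / 2 := by
  set a := y - Φ x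
  set b := y - Φ x'
  have hfit : y - Φ ((2 : ℝ)⁻¹ • (x + x')) = (2 : ℝ)⁻¹ • (a + b) := by
    simp only [a, b, map_smul, map_add]; module
  have hab : ‖a - b‖ = ‖Φ x - Φ x'‖ := by
    rw [show a - b = Φ x' - Φ x by simp only [a, b]; abel, norm_sub_rev]
  have hpar := parallelogram_law_with_norm ℝ a b
  have hreg : A (L.adjoint ((2 : ℝ)⁻¹ • (x + x'))) ≤
      (A (L.adjoint x) + A (L.adjoint x')) / 2 := by
    rw [map_smul, map_add, hA.map_smul, abs_of_pos (by norm_num)]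
    linarith [hA.add_le (L.adjoint x) (L.adjoint x')]
  simp only [obj, hfit, norm_smul, ← hab, Real.norm_eq_abs, abs_inv, abs_two]
  nlinarith [mul_le_mul_of_nonneg_left hreg hlam]

theorem fit_and_reg_eq_of_minimizers (hA : IsNorm A) (hlam : 0 < lam) {x x' : Euc N}
    (hx : ∀ z, obj Φ L A y lam x ≤ obj Φ L A y lam z)
    (hx' : ∀ z, obj Φ L A y lam x' ≤ obj Φ L A y lam z) :
    Φ x = Φ x' ∧ A (L.adjoint x) = A (L.adjoint x') := by
  have hobj : obj Φ L A y lam x = obj Φ L A y lam x' := le_antisymm (hx x') (hx' x)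
  have hmid := obj_midpoint_add_le Φ L y hA hlam.le x x'
  have hfit : Φ x = Φ x' := by
    rw [← sub_eq_zero, ← norm_eq_zero]
    nlinarith [hx ((2 : ℝ)⁻¹ • (x + x')), norm_nonneg (Φ x - Φ x')]
  refine ⟨hfit, mul_left_cancel₀ hlam.ne' ?_⟩
  simpa only [obj, hfit, add_right_inj] using hobj

end Objective

section Decomposable

variable {n : ℕ} {A : Euc n → ℝ} {u e α z : Euc n} {T : Submodule ℝ (Euc n)}

theorem Decomposable.add_mem_subdiff (hdec : Decomposable A u T e) {v : Euc n} (hv : v ∈ Tᗮ)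
    (hv1 : dualNorm A v ≤ 1) : e + v ∈ subdiff A u := by
  rw [hdec.2.1]
  refine ⟨?_, ?_⟩
  · rw [proj_eq_starProjection, map_add, Submodule.starProjection_eq_self_iff.mpr hdec.1,
      (Submodule.starProjection_apply_eq_zero_iff T).mpr hv, add_zero]
  · rwa [proj_eq_starProjection, map_add, Submodule.starProjection_orthogonal_apply_eq_zero hdec.1,
      Submodule.starProjection_eq_self_iff.mpr hv, zero_add]

/-- Each `e + v` with `v ∈ Tᗮ`, `dualNorm A v ≤ 1` is a subgradient at `u`, so
`⟪v, z⟫ ≤ -⟪e, z⟫ = ⟪proj Tᗮ α, z⟫`; the supremum formula for `A` on `Tᗮ` does the rest. -/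
theorem Decomposable.apply_proj_orthogonal_le_inner (hdec : Decomposable A u T e)
    (hα : α ∈ subdiff A u) (hz : A (u + z) ≤ A u) (hαz : ⟪α, z⟫ = 0) :
    A (proj Tᗮ z) ≤ ⟪proj Tᗮ α, z⟫ := by
  rw [hdec.2.1] at hα
  obtain ⟨hαT, hαS⟩ := hα
  have hsplit : e + proj Tᗮ α = α := by
    rw [← hαT]; exact Submodule.starProjection_add_starProjection_orthogonal α
  rw [hdec.2.2 (proj Tᗮ z) (Submodule.starProjection_apply_mem Tᗮ z)]
  refine csSup_le ⟨_, _, Submodule.starProjection_apply_mem _ α, hαS, rfl⟩ ?_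
  rintro _ ⟨v, hv, hv1, rfl⟩
  have hsub := hdec.add_mem_subdiff hv hv1 (u + z)
  rw [add_sub_cancel_left, inner_add_left] at hsub
  have he : ⟪e, z⟫ = -⟪proj Tᗮ α, z⟫ := by
    rw [← hsplit, inner_add_left] at hαz; linarith
  rw [proj_eq_starProjection] at he ⊢
  rw [Submodule.inner_starProjection_right_of_mem hv]
  linarith

end Decomposable

theorem proj_eq_zero_of_separable {n : ℕ} {A : Euc n → ℝ} (hA : IsNorm A)
    {V W : Submodule ℝ (Euc n)} (horth : V ⟂ W) {α z : Euc n}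
    (hsep : A (proj (V ⊔ W) z) = A (proj V z) + A (proj W z))
    (hle : A (proj (V ⊔ W) z) ≤ ⟪proj (V ⊔ W) α, z⟫)
    (hα : dualNorm A (proj (V ⊔ W) α) ≤ 1) (hαV : dualNorm A (proj V α) < 1) :
    proj V z = 0 := by
  simp only [proj_eq_starProjection] at *
  have hVpart :
      ⟪V.starProjection α, z⟫ ≤ dualNorm A (V.starProjection α) * A (V.starProjection z) := by
    rw [← Submodule.inner_starProjection_right_of_mem (V.starProjection_apply_mem α)]
    exact hA.inner_le_dualNorm_mul _ _
  have hWpart : ⟪W.starProjection α, z⟫ ≤ A (W.starProjection z) := by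
    have hWz : W.starProjection z ∈ V ⊔ W :=
      Submodule.mem_sup_right (W.starProjection_apply_mem z)
    have hinner : ⟪W.starProjection α, z⟫ = ⟪(V ⊔ W).starProjection α, W.starProjection z⟫ := by
      rw [Submodule.inner_starProjection_left_eq_right (V ⊔ W),
        Submodule.starProjection_eq_self_iff.mpr hWz, Submodule.inner_starProjection_left_eq_right]
    rw [hinner]
    calc _ ≤ dualNorm A ((V ⊔ W).starProjection α) * A (W.starProjection z) :=
          hA.inner_le_dualNorm_mul _ _
      _ ≤ A (W.starProjection z) := mul_le_of_le_one_left (hA.nonneg _) hα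
  rw [hsep, horth.starProjection_sup_apply, inner_add_left] at hle
  have hAVz : A (V.starProjection z) ≤ 0 := by
    nlinarith [hA.nonneg (V.starProjection z)]
  exact hA.eq_zero_iff.mp (le_antisymm hAVz (hA.nonneg _))

theorem stmt2 {N M P : ℕ} (Φ : Euc N →L[ℝ] Euc M) (L : Euc P →L[ℝ] Euc N)
    (A : Euc P → ℝ) (hA : IsNorm A) (lam : ℝ) (hlam : 0 < lam) (y : Euc M)
    (xs : Euc N) (hmin : ∀ x, obj Φ L A y lam xs ≤ obj Φ L A y lam x)
    (T : Submodule ℝ (Euc P)) (e : Euc P)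
    (hdec : Decomposable A (ContinuousLinearMap.adjoint L xs) T e)
    (V W : Submodule ℝ (Euc P))
    (horth : ∀ v ∈ V, ∀ w ∈ W, ⟪v, w⟫ = (0 : ℝ))
    (hsum : V ⊔ W = Tᗮ)
    (hsep : ∀ u : Euc P, A (proj Tᗮ u) = A (proj V u) + A (proj W u))
    (η : Euc M) (α : Euc P) (hSC : SC Φ L A xs η α)
    (hsat : dualNorm A (proj V α) < 1)
    (hinj : ∀ h : Euc N, Φ h = 0 → proj V (ContinuousLinearMap.adjoint L h) = 0 → h = 0) :
    ∀ x : Euc N, (∀ z, obj Φ L A y lam x ≤ obj Φ L A y lam z) → x = xs := by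
  intro x hx
  obtain ⟨hfit, hreg⟩ := fit_and_reg_eq_of_minimizers Φ L y hA hlam hx hmin
  have hΦ : Φ (x - xs) = 0 := by rw [map_sub, hfit, sub_self]
  have hαz : ⟪α, L.adjoint (x - xs)⟫ = 0 := by
    rw [ContinuousLinearMap.adjoint_inner_right, ← hSC.2.1,
      ContinuousLinearMap.adjoint_inner_left, hΦ, inner_zero_right]
  have hz : A (L.adjoint xs + L.adjoint (x - xs)) ≤ A (L.adjoint xs) := by
    rw [map_sub, add_sub_cancel, hreg]
  have hle := hdec.apply_proj_orthogonal_le_inner hSC.1 hz hαz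
  have hα : dualNorm A (proj Tᗮ α) ≤ 1 := (hdec.2.1 ▸ hSC.1).2
  rw [← hsum] at hle hα hsep
  have hVz := proj_eq_zero_of_separable hA (Submodule.isOrtho_iff_inner_eq.mpr horth)
    (hsep _) hle hα hsat
  exact sub_eq_zero.mp (hinj _ hΦ hVz)
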